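/- Let p be an odd prime and m, k positive integers with v₂(k) < v₂(m), and let π be a primitive element of F_{p^m}. If p^k ≡ 3 (mod 4), then the only triple (x,y,z) ∈ F_{p^m}³ satisfying both x² + y² − πz² = 0 and x^{p^k+1} + y^{p^k+1} + π^{(p^k+1)/2} z^{p^k+1} = 0 is (0,0,0). -/

import Mathlib

/-!
With `q = p ^ k ≡ 3 (mod 4)` and `m` even, `-1 = i ^ 2` in `F` and the Frobenius `t ↦ t ^ q`
sends `i` to `-i`, so `a = x + i y` and `b = x - i y` satisfy
`a ^ (q + 1) + b ^ (q + 1) = 2 (x ^ (q + 1) + y ^ (q + 1))`. As `a b = π z ^ 2`, the second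
equation says `(a ^ ((q + 1) / 2) + b ^ ((q + 1) / 2)) ^ 2 = 0`, hence `a ^ (q + 1) = b ^ (q + 1)`.
If `z = 0` this forces `a = b = 0`. Otherwise `a / b` is a `(q + 1)`-th root of unity, and
since `v₂ (q + 1) = v₂ (p + 1) + v₂ k < v₂ (p + 1) + v₂ m = v₂ (p ^ m - 1)` (lifting the
exponent), such roots of unity are squares. Then `π = (a / b) (b / z) ^ 2` is a square, which
a generator of `Fˣ` is not.
-/

theorem Nat.mod_four_eq_three_of_pow_mod_four_eq_three {p k : ℕ} (h : p ^ k % 4 = 3) :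
    p % 4 = 3 := by
  have hk : k ≠ 0 := by rintro rfl; simp at h
  have hodd : Odd p := (Nat.odd_pow_iff hk).mp (Nat.odd_iff.mpr (by omega))
  rcases Nat.odd_mod_four_iff.mp (Nat.odd_iff.mp hodd) with h1 | h3
  · rw [Nat.pow_mod, h1, one_pow] at h
    omega
  · exact h3

theorem Nat.pow_mod_four_eq_one_of_even {p m : ℕ} (hp : Odd p) (hm : Even m) : p ^ m % 4 = 1 := by
  obtain ⟨j, rfl⟩ := hm
  obtain ⟨t, rfl⟩ := hp
  have h : (2 * t + 1) ^ 2 % 4 = 1 := by ring_nf; omega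
  rw [← two_mul, pow_mul, Nat.pow_mod, h, one_pow, Nat.one_mod_eq_one]
  decide

theorem padicValNat_two_sub_one_of_mod_four_eq_three {q : ℕ} (hq : q % 4 = 3) :
    padicValNat 2 (q - 1) = 1 := by
  have hodd : ¬ 2 ∣ (q - 1) / 2 := by omega
  rw [show q - 1 = 2 * ((q - 1) / 2) by omega, padicValNat.mul two_ne_zero (by omega),
    padicValNat.self one_lt_two, padicValNat.eq_zero_of_not_dvd hodd]

theorem padicValNat_two_pow_sub_one {p n : ℕ} (hp : p % 4 = 3) (hn : Even n) (hn0 : n ≠ 0) :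
    padicValNat 2 (p ^ n - 1) = padicValNat 2 (p + 1) + padicValNat 2 n := by
  have h := padicValNat.pow_two_sub_one (x := p) (by omega) (by omega) hn0 hn
  rw [padicValNat_two_sub_one_of_mod_four_eq_three hp] at h
  omega

theorem padicValNat_two_pow_add_one {p k : ℕ} (hk : p ^ k % 4 = 3) :
    padicValNat 2 (p ^ k + 1) = padicValNat 2 (p + 1) + padicValNat 2 k := by
  have hp := Nat.mod_four_eq_three_of_pow_mod_four_eq_three hk
  have hk0 : k ≠ 0 := by rintro rfl; simp at hk
  have hsq : p ^ (2 * k) - 1 = (p ^ k + 1) * (p ^ k - 1) := by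
    rw [pow_mul', ← Nat.sq_sub_sq, one_pow]
  have h := padicValNat_two_pow_sub_one hp (even_two_mul k) (by omega)
  rw [hsq, padicValNat.mul (by omega) (by omega), padicValNat_two_sub_one_of_mod_four_eq_three hk,
    padicValNat.mul two_ne_zero hk0, padicValNat.self one_lt_two] at h
  omega

theorem Nat.even_of_padicValNat_two_pos {m : ℕ} (h : 0 < padicValNat 2 m) : Even m :=
  even_iff_two_dvd.mpr (dvd_of_one_le_padicValNat h)

theorem padicValNat_two_pow_add_one_lt_pow_sub_one {p k m : ℕ} (hk : p ^ k % 4 = 3)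
    (hkm : padicValNat 2 k < padicValNat 2 m) :
    padicValNat 2 (p ^ k + 1) < padicValNat 2 (p ^ m - 1) := by
  have hm0 : m ≠ 0 := by rintro rfl; simp at hkm
  have hm : Even m := Nat.even_of_padicValNat_two_pos (by omega)
  rw [padicValNat_two_pow_add_one hk,
    padicValNat_two_pow_sub_one (Nat.mod_four_eq_three_of_pow_mod_four_eq_three hk) hm hm0]
  omega

theorem Nat.gcd_dvd_div_two_of_padicValNat_lt {n N : ℕ} (hn : n ≠ 0)
    (h : padicValNat 2 n < padicValNat 2 N) : n.gcd N ∣ N / 2 := by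
  have hN : N ≠ 0 := by rintro rfl; simp at h
  have hle : padicValNat 2 (n.gcd N) ≤ padicValNat 2 n :=
    (padicValNat_dvd_iff_le hn).mp (pow_padicValNat_dvd.trans (Nat.gcd_dvd_left n N))
  set g := n.gcd N
  obtain ⟨t, ht⟩ : g ∣ N := Nat.gcd_dvd_right n N
  obtain ⟨s, rfl⟩ : 2 ∣ t := by
    by_contra hodd
    rw [ht, padicValNat.mul (left_ne_zero_of_mul (ht ▸ hN)) (right_ne_zero_of_mul (ht ▸ hN)),
      padicValNat.eq_zero_of_not_dvd hodd] at h
    omega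
  rw [ht, mul_left_comm, Nat.mul_div_cancel_left _ two_pos]
  exact dvd_mul_right _ _

namespace FiniteField

variable {F : Type*} [Field F] [Fintype F]

theorem isSquare_of_pow_eq_one {n : ℕ} (hn : n ≠ 0)
    (hv : padicValNat 2 n < padicValNat 2 (Fintype.card F - 1)) {c : F} (hc : c ^ n = 1) :
    IsSquare c := by
  have hc0 : c ≠ 0 := by rintro rfl; simp [zero_pow hn] at hc
  have hF : ringChar F ≠ 2 := by
    intro h2
    have h1 := even_card_of_char_two h2
    have h0 := Fintype.card_pos (α := F)
    have : ¬ 2 ∣ Fintype.card F - 1 := by omega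
    rw [padicValNat.eq_zero_of_not_dvd this] at hv
    omega
  have hcard := odd_card_of_char_ne_two hF
  -- Euler's criterion; the order of `c` divides `gcd n (#F - 1)`, which divides `(#F - 1) / 2`.
  rw [isSquare_iff hF hc0, show Fintype.card F / 2 = (Fintype.card F - 1) / 2 by omega]
  obtain ⟨s, hs⟩ := Nat.gcd_dvd_div_two_of_padicValNat_lt hn hv
  rw [hs, pow_mul, pow_gcd_eq_one.mpr ⟨hc, pow_card_sub_one_eq_one c hc0⟩, one_pow]

theorem not_isSquare_of_forall_mem_zpowers (hF : ringChar F ≠ 2) {π : Fˣ}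
    (hπ : ∀ x : Fˣ, x ∈ Subgroup.zpowers π) : ¬ IsSquare (π : F) := by
  rintro ⟨s, hs⟩
  have hs0 : s ≠ 0 := by rintro rfl; simp at hs
  have hπ2 : IsSquare π := ⟨Units.mk0 s hs0, Units.ext hs⟩
  obtain ⟨a, ha⟩ := exists_nonsquare hF
  have ha0 : a ≠ 0 := by rintro rfl; exact ha IsSquare.zero
  obtain ⟨j, hj⟩ := Subgroup.mem_zpowers_iff.mp (hπ (Units.mk0 a ha0))
  have := (hπ2.zpow j).map (Units.coeHom F)
  rw [hj] at this
  exact ha this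

theorem isSquare_of_mul_eq_of_pow_eq_pow {n : ℕ} (hn : n ≠ 0)
    (hv : padicValNat 2 n < padicValNat 2 (Fintype.card F - 1)) {a b c z : F}
    (hab : a * b = c * z ^ 2) (hz : z ≠ 0) (h : a ^ n = b ^ n) : IsSquare c := by
  rcases eq_or_ne c 0 with rfl | hc
  · exact IsSquare.zero
  have hb : b ≠ 0 := by rintro rfl; simp [hc, hz] at hab
  have hsq : IsSquare (a / b) :=
    isSquare_of_pow_eq_one hn hv (by rw [div_pow, h, div_self (pow_ne_zero _ hb)])
  have hc_eq : c = a / b * (b / z) ^ 2 := by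
    field_simp
    linear_combination -hab
  rw [hc_eq]
  exact hsq.mul (IsSquare.sq _)

end FiniteField

theorem eq_zero_and_eq_zero_of_add_mul_pow_eq_sub_mul_pow {R : Type*} [CommRing R]
    [NoZeroDivisors R] (h2 : (2 : R) ≠ 0) {i x y : R} (hi : i ^ 2 = -1) {n : ℕ} (hn : n ≠ 0)
    (hxy : x ^ 2 + y ^ 2 = 0) (h : (x + i * y) ^ n = (x - i * y) ^ n) : x = 0 ∧ y = 0 := by
  have hmul : (x + i * y) * (x - i * y) = 0 := by linear_combination hxy - y ^ 2 * hi
  have hboth : x + i * y = 0 ∧ x - i * y = 0 := by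
    rcases mul_eq_zero.mp hmul with ha | hb
    · rw [ha, zero_pow hn, eq_comm, pow_eq_zero_iff hn] at h
      exact ⟨ha, h⟩
    · rw [hb, zero_pow hn, pow_eq_zero_iff hn] at h
      exact ⟨h, hb⟩
  have hi0 : i ≠ 0 := by
    rintro rfl
    exact h2 (by linear_combination 2 * hi)
  have hx : 2 * x = 0 := by linear_combination hboth.1 + hboth.2
  have hy : 2 * i * y = 0 := by linear_combination hboth.1 - hboth.2
  exact ⟨(mul_eq_zero.mp hx).resolve_left h2,
    (mul_eq_zero.mp hy).resolve_left (mul_ne_zero h2 hi0)⟩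

section ExpChar

variable {R : Type*} [CommRing R] {p : ℕ} [ExpChar R p] {i : R}

theorem pow_eq_neg_of_sq_eq_neg_one (hi : i ^ 2 = -1) {q : ℕ} (hq : q % 4 = 3) : i ^ q = -i := by
  rw [← Nat.div_add_mod q 4, hq, pow_add, pow_mul, show i ^ 4 = (i ^ 2) ^ 2 by ring, hi]
  linear_combination i * hi

theorem add_mul_pow_add_sub_mul_pow (hi : i ^ 2 = -1) {k : ℕ} (hk : p ^ k % 4 = 3) (x y : R) :
    (x + i * y) ^ (p ^ k + 1) + (x - i * y) ^ (p ^ k + 1) =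
      2 * (x ^ (p ^ k + 1) + y ^ (p ^ k + 1)) := by
  -- Frobenius conjugates `x + i * y` and `x - i * y`, as it sends `i` to `-i`.
  have hiq := pow_eq_neg_of_sq_eq_neg_one hi hk
  rw [pow_succ, pow_succ, add_pow_expChar_pow, sub_pow_expChar_pow, mul_pow, hiq]
  linear_combination (-2 * y ^ p ^ k * y) * hi

theorem add_mul_pow_eq_sub_mul_pow [NoZeroDivisors R] (hi : i ^ 2 = -1) {k : ℕ}
    (hk : p ^ k % 4 = 3) {x y z c : R} (h1 : x ^ 2 + y ^ 2 - c * z ^ 2 = 0)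
    (h2 : x ^ (p ^ k + 1) + y ^ (p ^ k + 1) + c ^ ((p ^ k + 1) / 2) * z ^ (p ^ k + 1) = 0) :
    (x + i * y) ^ (p ^ k + 1) = (x - i * y) ^ (p ^ k + 1) := by
  set r := (p ^ k + 1) / 2
  have hr : p ^ k + 1 = 2 * r := by omega
  have hab : (x + i * y) * (x - i * y) = c * z ^ 2 := by linear_combination h1 - y ^ 2 * hi
  have hsq : ((x + i * y) ^ r + (x - i * y) ^ r) ^ 2 = 0 := calc
    _ = (x + i * y) ^ (p ^ k + 1) + (x - i * y) ^ (p ^ k + 1)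
          + 2 * ((x + i * y) * (x - i * y)) ^ r := by rw [hr, mul_pow]; ring
    _ = 2 * (x ^ (p ^ k + 1) + y ^ (p ^ k + 1) + c ^ r * z ^ (p ^ k + 1)) := by
      rw [add_mul_pow_add_sub_mul_pow hi hk, hab, mul_pow, ← pow_mul, hr]; ring
    _ = 0 := by rw [h2, mul_zero]
  rw [hr, pow_mul', pow_mul', eq_neg_of_add_eq_zero_left (pow_eq_zero_iff two_ne_zero |>.mp hsq),
    neg_sq]

end ExpChar

theorem stmt_5_general (p m k : ℕ) (hp : p.Prime) (hpo : Odd p)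
    (hv : padicValNat 2 k < padicValNat 2 m) (hmod : p ^ k % 4 = 3)
    (F : Type*) [Field F] [Fintype F] (hF : Fintype.card F = p ^ m)
    (π : Fˣ) (hπ : ∀ x : Fˣ, x ∈ Subgroup.zpowers π) :
    ∀ x y z : F, x ^ 2 + y ^ 2 - (π : F) * z ^ 2 = 0 →
      x ^ (p ^ k + 1) + y ^ (p ^ k + 1)
        + (π : F) ^ ((p ^ k + 1) / 2) * z ^ (p ^ k + 1) = 0 →
      x = 0 ∧ y = 0 ∧ z = 0 := by
  intro x y z h1 h2
  have : Fact p.Prime := ⟨hp⟩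
  have : CharP F p := charP_of_card_eq_prime_pow hF
  have hchar : ringChar F ≠ 2 := by
    rw [ringChar.eq F p]
    rintro rfl
    exact Nat.not_odd_iff_even.mpr even_two hpo
  obtain ⟨i, hi⟩ : ∃ i : F, i ^ 2 = -1 := by
    obtain ⟨i, hi⟩ := FiniteField.isSquare_neg_one_iff.mpr (by
      rw [hF, Nat.pow_mod_four_eq_one_of_even hpo (Nat.even_of_padicValNat_two_pos (by omega))]
      decide)
    exact ⟨i, by rw [hi, sq]⟩
  have hpow := add_mul_pow_eq_sub_mul_pow hi hmod h1 h2
  rcases eq_or_ne z 0 with rfl | hz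
  · obtain ⟨hx, hy⟩ := eq_zero_and_eq_zero_of_add_mul_pow_eq_sub_mul_pow
      (Ring.two_ne_zero hchar) hi (by omega) (by simpa using h1) hpow
    exact ⟨hx, hy, rfl⟩
  · refine absurd ?_ (FiniteField.not_isSquare_of_forall_mem_zpowers hchar hπ)
    refine FiniteField.isSquare_of_mul_eq_of_pow_eq_pow (by omega) ?_
      (by linear_combination h1 - y ^ 2 * hi) hz hpow
    rw [hF]
    exact padicValNat_two_pow_add_one_lt_pow_sub_one hmod hv

theorem stmt_5 (p m k : ℕ) (hp : p.Prime) (hpo : Odd p) (hm : 0 < m) (hk : 0 < k)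
    (hv : padicValNat 2 k < padicValNat 2 m) (hmod : p ^ k % 4 = 3)
    (F : Type*) [Field F] [Fintype F] (hF : Fintype.card F = p ^ m)
    (π : Fˣ) (hπ : ∀ x : Fˣ, x ∈ Subgroup.zpowers π) :
    ∀ x y z : F, x ^ 2 + y ^ 2 - (π : F) * z ^ 2 = 0 →
      x ^ (p ^ k + 1) + y ^ (p ^ k + 1)
        + (π : F) ^ ((p ^ k + 1) / 2) * z ^ (p ^ k + 1) = 0 →
      x = 0 ∧ y = 0 ∧ z = 0 :=
  stmt_5_general p m k hp hpo hv hmod F hF π hπ
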